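/- arXiv:1110.5758 — 5 statements merged into one kernel-verified Lean document; each statement's English description precedes it below -/
import Mathlib

section
/- Let Γ : ℝⁿ → (Fin n → Fin n → Fin n → ℝ) be a smooth connection coefficient field whose curvature vanishes, i.e. ∂ₛΓʳᵇᵃ − ∂ᵣΓₛᵇᵃ + Γₛᵇᶜ Γᵣᶜᵃ − Γᵣᵇᶜ Γₛᶜᵃ = 0 for all indices. Define the total derivative of a smooth function Ω : ℝⁿ × ℝⁿ → ℝ (in variables (x, ξ)) by (D_r Ω)(x,ξ) = ∂Ω/∂xʳ + Σ_{a,b} (∂Ω/∂ξᵃ) Γᵣᵇᵃ(x) ξᵇ. Then D_s D_r Ω = D_r D_s Ω for all r, s. -/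
/-! Proposition 3: flatness implies symmetry of iterated total derivatives
on horizontal 0-forms of the tangent bundle. -/

noncomputable section

open scoped BigOperators

/-- partial derivative in the base variable `x` (direction `r`). -/
def pdx {n : ℕ} (f : (Fin n → ℝ) × (Fin n → ℝ) → ℝ) (r : Fin n)
    (p : (Fin n → ℝ) × (Fin n → ℝ)) : ℝ :=
  fderiv ℝ f p (Pi.single r 1, 0)

/-- partial derivative in the fiber variable `ξ` (direction `a`). -/
def pdxi {n : ℕ} (f : (Fin n → ℝ) × (Fin n → ℝ) → ℝ) (a : Fin n)
    (p : (Fin n → ℝ) × (Fin n → ℝ)) : ℝ :=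
  fderiv ℝ f p (0, Pi.single a 1)

/-- partial derivative of a function on the base. -/
def pdB {n : ℕ} (f : (Fin n → ℝ) → ℝ) (r : Fin n) (x : Fin n → ℝ) : ℝ :=
  fderiv ℝ f x (Pi.single r 1)

/-- The total derivative `(D_r Ω)(x,ξ) = ∂Ω/∂xʳ + Σ_{a,b} (∂Ω/∂ξᵃ) Γᵣᵇᵃ(x) ξᵇ`. -/
def totalD {n : ℕ} (Γ : (Fin n → ℝ) → Fin n → Fin n → Fin n → ℝ)
    (Ω : (Fin n → ℝ) × (Fin n → ℝ) → ℝ) (r : Fin n)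
    (p : (Fin n → ℝ) × (Fin n → ℝ)) : ℝ :=
  pdx Ω r p + ∑ a, ∑ b, pdxi Ω a p * Γ p.1 r b a * p.2 b

variable {n : ℕ}

abbrev EE (n : ℕ) := (Fin n → ℝ) × (Fin n → ℝ)

lemma contDiff_fd {f : EE n → ℝ} (hf : ContDiff ℝ (⊤ : ℕ∞) f) (u : EE n) :
    ContDiff ℝ (⊤ : ℕ∞) fun p => fderiv ℝ f p u :=
  (ContinuousLinearMap.apply ℝ ℝ u).contDiff.comp (hf.fderiv_right (by simp))

lemma symm_fd {f : EE n → ℝ} (hf : ContDiff ℝ (⊤ : ℕ∞) f) (u u' : EE n) (p : EE n) :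
    fderiv ℝ (fun q => fderiv ℝ f q u) p u'
      = fderiv ℝ (fun q => fderiv ℝ f q u') p u := by
  have hdf : ∀ y, HasFDerivAt f (fderiv ℝ f y) y := fun y =>
    (hf.differentiable (by simp) y).hasFDerivAt
  have hdf' : HasFDerivAt (fderiv ℝ f) (fderiv ℝ (fderiv ℝ f) p) p :=
    ((hf.fderiv_right (m := (⊤ : ℕ∞)) (by simp)).differentiable (by simp) p).hasFDerivAt
  have hsymm := second_derivative_symmetric hdf hdf' u u'
  have h1 : ∀ vv : EE n, HasFDerivAt (fun q => fderiv ℝ f q vv)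
      ((ContinuousLinearMap.apply ℝ ℝ vv).comp (fderiv ℝ (fderiv ℝ f) p)) p := fun vv =>
    (ContinuousLinearMap.apply ℝ ℝ vv).hasFDerivAt.comp p hdf'
  rw [(h1 u).fderiv, (h1 u').fderiv]
  simpa using hsymm.symm

lemma fderiv_add_apply' {f g : EE n → ℝ} {p u : EE n}
    (hf : DifferentiableAt ℝ f p) (hg : DifferentiableAt ℝ g p) :
    fderiv ℝ (fun q => f q + g q) p u = fderiv ℝ f p u + fderiv ℝ g p u := by
  rw [fderiv_fun_add hf hg]; rfl

lemma fderiv_mul_apply' {f g : EE n → ℝ} {p u : EE n}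
    (hf : DifferentiableAt ℝ f p) (hg : DifferentiableAt ℝ g p) :
    fderiv ℝ (fun q => f q * g q) p u = f p * fderiv ℝ g p u + g p * fderiv ℝ f p u := by
  rw [fderiv_fun_mul hf hg]; simp

lemma fderiv_sum_apply' {ι : Type*} (t : Finset ι) {A : ι → EE n → ℝ} {p u : EE n}
    (h : ∀ i ∈ t, DifferentiableAt ℝ (A i) p) :
    fderiv ℝ (fun q => ∑ i ∈ t, A i q) p u = ∑ i ∈ t, fderiv ℝ (A i) p u := by
  rw [fderiv_fun_sum h]; simp

lemma fderiv_fst_comp {g : (Fin n → ℝ) → ℝ} (hg : ContDiff ℝ (⊤ : ℕ∞) g) (p u : EE n) :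
    fderiv ℝ (fun q : EE n => g q.1) p u = fderiv ℝ g p.1 u.1 := by
  have h : HasFDerivAt (fun q : EE n => g q.1)
      ((fderiv ℝ g p.1).comp (ContinuousLinearMap.fst ℝ (Fin n → ℝ) (Fin n → ℝ))) p :=
    ((hg.differentiable (by simp) p.1).hasFDerivAt).comp p hasFDerivAt_fst
  rw [h.fderiv]; rfl

lemma fderiv_snd_apply (b : Fin n) (p u : EE n) :
    fderiv ℝ (fun q : EE n => q.2 b) p u = u.2 b := by
  have h : HasFDerivAt (fun q : EE n => q.2 b)
      ((ContinuousLinearMap.proj b).comp (ContinuousLinearMap.snd ℝ (Fin n → ℝ) (Fin n → ℝ))) p :=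
    ((ContinuousLinearMap.proj b).comp
      (ContinuousLinearMap.snd ℝ (Fin n → ℝ) (Fin n → ℝ))).hasFDerivAt
  rw [h.fderiv]; rfl

lemma fderiv_totalD {Γ : (Fin n → ℝ) → Fin n → Fin n → Fin n → ℝ}
    (hΓ : ∀ r b a : Fin n, ContDiff ℝ (⊤ : ℕ∞) fun x => Γ x r b a)
    {Ω : EE n → ℝ} (hΩ : ContDiff ℝ (⊤ : ℕ∞) Ω) (r : Fin n) (p u : EE n) :
    fderiv ℝ (totalD Γ Ω r) p u =
      fderiv ℝ (fun q => pdx Ω r q) p u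
      + ∑ a, ∑ b,
          (fderiv ℝ (fun q => pdxi Ω a q) p u * Γ p.1 r b a * p.2 b
           + pdxi Ω a p * fderiv ℝ (fun x => Γ x r b a) p.1 u.1 * p.2 b
           + pdxi Ω a p * Γ p.1 r b a * u.2 b) := by
  have hXi : ∀ a : Fin n, Differentiable ℝ (fun q : EE n => pdxi Ω a q) := fun a =>
    (contDiff_fd hΩ ((0 : Fin n → ℝ), Pi.single a 1)).differentiable (by simp)
  have hG : ∀ b a : Fin n, Differentiable ℝ (fun q : EE n => Γ q.1 r b a) := fun b a =>
    ((hΓ r b a).differentiable (by simp)).comp differentiable_fst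
  have hSnd : ∀ b : Fin n, Differentiable ℝ (fun q : EE n => q.2 b) := fun b =>
    ((ContinuousLinearMap.proj b).comp
      (ContinuousLinearMap.snd ℝ (Fin n → ℝ) (Fin n → ℝ))).differentiable
  have hterm : ∀ a b : Fin n,
      DifferentiableAt ℝ (fun q : EE n => pdxi Ω a q * Γ q.1 r b a * q.2 b) p :=
    fun a b => ((hXi a p).mul (hG b a p)).mul (hSnd b p)
  have hsumB : ∀ a : Fin n,
      DifferentiableAt ℝ (fun q : EE n => ∑ b, pdxi Ω a q * Γ q.1 r b a * q.2 b) p :=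
    fun a => DifferentiableAt.fun_sum fun b _ => hterm a b
  have hpdx : DifferentiableAt ℝ (fun q : EE n => pdx Ω r q) p :=
    ((contDiff_fd hΩ ((Pi.single r 1 : Fin n → ℝ), 0)).differentiable (by simp)) p
  have h0 : totalD Γ Ω r
      = fun q : EE n => pdx Ω r q + ∑ a, ∑ b, pdxi Ω a q * Γ q.1 r b a * q.2 b := rfl
  rw [h0, fderiv_add_apply' hpdx (DifferentiableAt.fun_sum fun a _ => hsumB a),
    fderiv_sum_apply' _ (fun a _ => hsumB a)]
  congr 1
  refine Finset.sum_congr rfl fun a _ => ?_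
  rw [fderiv_sum_apply' _ (fun b _ => hterm a b)]
  refine Finset.sum_congr rfl fun b _ => ?_
  rw [fderiv_mul_apply' ((hXi a p).fun_mul (hG b a p)) (hSnd b p),
    fderiv_mul_apply' (hXi a p) (hG b a p),
    fderiv_snd_apply, fderiv_fst_comp (hΓ r b a)]
  ring

lemma totalD_totalD {Γ : (Fin n → ℝ) → Fin n → Fin n → Fin n → ℝ}
    (hΓ : ∀ r b a : Fin n, ContDiff ℝ (⊤ : ℕ∞) fun x => Γ x r b a)
    {Ω : EE n → ℝ} (hΩ : ContDiff ℝ (⊤ : ℕ∞) Ω) (u v : Fin n) (p : EE n) :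
    totalD Γ (totalD Γ Ω u) v p =
      fderiv ℝ (fun q => pdx Ω u q) p ((Pi.single v 1 : Fin n → ℝ), 0)
      + (∑ a, ∑ b, fderiv ℝ (fun q => pdxi Ω a q) p ((Pi.single v 1 : Fin n → ℝ), 0)
          * Γ p.1 u b a * p.2 b)
      + (∑ a, ∑ b, pdxi Ω a p * pdB (fun x => Γ x u b a) v p.1 * p.2 b)
      + (∑ c, ∑ d, fderiv ℝ (fun q => pdxi Ω c q) p ((Pi.single u 1 : Fin n → ℝ), 0)
          * Γ p.1 v d c * p.2 d)
      + (∑ c, ∑ d, (∑ a, ∑ b, fderiv ℝ (fun q => pdxi Ω a q) p ((0 : Fin n → ℝ), Pi.single c 1)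
          * Γ p.1 u b a * p.2 b) * Γ p.1 v d c * p.2 d)
      + (∑ c, ∑ d, (∑ a, pdxi Ω a p * Γ p.1 u c a) * Γ p.1 v d c * p.2 d) := by
  have e1 : pdx (totalD Γ Ω u) v p =
      fderiv ℝ (fun q => pdx Ω u q) p ((Pi.single v 1 : Fin n → ℝ), 0)
      + ((∑ a, ∑ b, fderiv ℝ (fun q => pdxi Ω a q) p ((Pi.single v 1 : Fin n → ℝ), 0)
          * Γ p.1 u b a * p.2 b)
        + (∑ a, ∑ b, pdxi Ω a p * pdB (fun x => Γ x u b a) v p.1 * p.2 b)) := by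
    rw [show pdx (totalD Γ Ω u) v p
        = fderiv ℝ (totalD Γ Ω u) p ((Pi.single v 1 : Fin n → ℝ), 0) from rfl,
      fderiv_totalD hΓ hΩ u p ((Pi.single v 1 : Fin n → ℝ), 0)]
    simp [pdB, Finset.sum_add_distrib]
  have e2 : ∀ c : Fin n, pdxi (totalD Γ Ω u) c p =
      fderiv ℝ (fun q => pdxi Ω c q) p ((Pi.single u 1 : Fin n → ℝ), 0)
      + ((∑ a, ∑ b, fderiv ℝ (fun q => pdxi Ω a q) p ((0 : Fin n → ℝ), Pi.single c 1)
          * Γ p.1 u b a * p.2 b)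
        + (∑ a, pdxi Ω a p * Γ p.1 u c a)) := by
    intro c
    rw [show pdxi (totalD Γ Ω u) c p
        = fderiv ℝ (totalD Γ Ω u) p ((0 : Fin n → ℝ), Pi.single c 1) from rfl,
      fderiv_totalD hΓ hΩ u p ((0 : Fin n → ℝ), Pi.single c 1)]
    have hsym : fderiv ℝ (fun q => pdx Ω u q) p ((0 : Fin n → ℝ), Pi.single c 1)
        = fderiv ℝ (fun q => pdxi Ω c q) p ((Pi.single u 1 : Fin n → ℝ), 0) := by
      simpa only [pdx, pdxi] using
        symm_fd hΩ ((Pi.single u 1 : Fin n → ℝ), 0) ((0 : Fin n → ℝ), Pi.single c 1) p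
    rw [hsym]
    simp [Pi.single_apply, mul_ite, Finset.sum_ite_eq', Finset.sum_add_distrib]
  have e3 : (∑ c, ∑ d, pdxi (totalD Γ Ω u) c p * Γ p.1 v d c * p.2 d)
      = ∑ c, ∑ d,
        ((fderiv ℝ (fun q => pdxi Ω c q) p ((Pi.single u 1 : Fin n → ℝ), 0)
          + ((∑ a, ∑ b, fderiv ℝ (fun q => pdxi Ω a q) p ((0 : Fin n → ℝ), Pi.single c 1)
              * Γ p.1 u b a * p.2 b)
            + (∑ a, pdxi Ω a p * Γ p.1 u c a))) * Γ p.1 v d c * p.2 d) :=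
    Finset.sum_congr rfl fun c _ => Finset.sum_congr rfl fun d _ => by rw [e2 c]
  rw [show totalD Γ (totalD Γ Ω u) v p = pdx (totalD Γ Ω u) v p
      + ∑ c, ∑ d, pdxi (totalD Γ Ω u) c p * Γ p.1 v d c * p.2 d from rfl, e1, e3]
  simp only [add_mul, Finset.sum_add_distrib]
  ring

lemma sum_rot {m : ℕ} (f : Fin m → Fin m → Fin m → ℝ) :
    ∑ c, ∑ d, ∑ a, f c d a = ∑ a, ∑ d, ∑ c, f c d a := by
  calc ∑ c, ∑ d, ∑ a, f c d a
      = ∑ c, ∑ a, ∑ d, f c d a := Finset.sum_congr rfl fun c _ => Finset.sum_comm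
    _ = ∑ a, ∑ c, ∑ d, f c d a := Finset.sum_comm
    _ = ∑ a, ∑ d, ∑ c, f c d a := Finset.sum_congr rfl fun a _ => Finset.sum_comm


theorem totalD_comm {n : ℕ} (Γ : (Fin n → ℝ) → Fin n → Fin n → Fin n → ℝ)
    (hΓ : ∀ r b a : Fin n, ContDiff ℝ (⊤ : ℕ∞) fun x => Γ x r b a)
    (hflat : ∀ (x : Fin n → ℝ) (s r a b : Fin n),
      pdB (fun x => Γ x r b a) s x - pdB (fun x => Γ x s b a) r x
        + ∑ c, (Γ x s b c * Γ x r c a - Γ x r b c * Γ x s c a) = 0)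
    (Ω : (Fin n → ℝ) × (Fin n → ℝ) → ℝ) (hΩ : ContDiff ℝ (⊤ : ℕ∞) Ω)
    (s r : Fin n) :
    totalD Γ (totalD Γ Ω r) s = totalD Γ (totalD Γ Ω s) r := by
  funext p
  rw [totalD_totalD hΓ hΩ r s p, totalD_totalD hΓ hΩ s r p]
  -- abbreviations
  set P : Fin n → ℝ := fun a => pdxi Ω a p with hP
  -- symmetry of the pure second base derivative
  have hH : fderiv ℝ (fun q => pdx Ω r q) p ((Pi.single s 1 : Fin n → ℝ), 0)
      = fderiv ℝ (fun q => pdx Ω s q) p ((Pi.single r 1 : Fin n → ℝ), 0) := by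
    simpa only [pdx] using
      symm_fd hΩ ((Pi.single r 1 : Fin n → ℝ), 0) ((Pi.single s 1 : Fin n → ℝ), 0) p
  -- symmetry of the mixed fiber second derivative
  have hM : ∀ c a : Fin n,
      fderiv ℝ (fun q => pdxi Ω a q) p ((0 : Fin n → ℝ), Pi.single c 1)
      = fderiv ℝ (fun q => pdxi Ω c q) p ((0 : Fin n → ℝ), Pi.single a 1) := by
    intro c a
    simpa only [pdxi] using
      symm_fd hΩ ((0 : Fin n → ℝ), Pi.single a 1) ((0 : Fin n → ℝ), Pi.single c 1) p
  -- normal form for the quadratic (M) term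
  have h5norm : ∀ v u : Fin n,
      (∑ c, ∑ d, (∑ a, ∑ b,
          fderiv ℝ (fun q => pdxi Ω a q) p ((0 : Fin n → ℝ), Pi.single c 1)
            * Γ p.1 u b a * p.2 b) * Γ p.1 v d c * p.2 d)
      = ∑ c, ∑ a, fderiv ℝ (fun q => pdxi Ω a q) p ((0 : Fin n → ℝ), Pi.single c 1)
          * (∑ b, Γ p.1 u b a * p.2 b) * (∑ d, Γ p.1 v d c * p.2 d) := by
    intro v u
    refine Finset.sum_congr rfl fun c _ => ?_
    have hfac : ∀ X : ℝ, ∑ d, X * Γ p.1 v d c * p.2 d = X * ∑ d, Γ p.1 v d c * p.2 d := by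
      intro X
      rw [Finset.mul_sum]
      exact Finset.sum_congr rfl fun d _ => by ring
    rw [hfac, Finset.sum_mul]
    refine Finset.sum_congr rfl fun a _ => ?_
    have : ∑ b, fderiv ℝ (fun q => pdxi Ω a q) p ((0 : Fin n → ℝ), Pi.single c 1)
        * Γ p.1 u b a * p.2 b
        = fderiv ℝ (fun q => pdxi Ω a q) p ((0 : Fin n → ℝ), Pi.single c 1)
          * ∑ b, Γ p.1 u b a * p.2 b := by
      rw [Finset.mul_sum]
      exact Finset.sum_congr rfl fun b _ => by ring
    rw [this]
  have h5 : (∑ c, ∑ d, (∑ a, ∑ b,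
        fderiv ℝ (fun q => pdxi Ω a q) p ((0 : Fin n → ℝ), Pi.single c 1)
          * Γ p.1 r b a * p.2 b) * Γ p.1 s d c * p.2 d)
      = ∑ c, ∑ d, (∑ a, ∑ b,
        fderiv ℝ (fun q => pdxi Ω a q) p ((0 : Fin n → ℝ), Pi.single c 1)
          * Γ p.1 s b a * p.2 b) * Γ p.1 r d c * p.2 d := by
    rw [h5norm s r, h5norm r s, Finset.sum_comm]
    refine Finset.sum_congr rfl fun i _ => Finset.sum_congr rfl fun j _ => ?_
    rw [hM j i]
    ring
  -- normal form for the Γ·Γ term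
  have h6 : ∀ v u : Fin n,
      (∑ c, ∑ d, (∑ a, P a * Γ p.1 u c a) * Γ p.1 v d c * p.2 d)
      = ∑ a, ∑ b, P a * p.2 b * (∑ c, Γ p.1 v b c * Γ p.1 u c a) := by
    intro v u
    have step : (∑ c, ∑ d, (∑ a, P a * Γ p.1 u c a) * Γ p.1 v d c * p.2 d)
        = ∑ c, ∑ d, ∑ a, P a * Γ p.1 u c a * Γ p.1 v d c * p.2 d := by
      refine Finset.sum_congr rfl fun c _ => Finset.sum_congr rfl fun d _ => ?_
      rw [Finset.sum_mul, Finset.sum_mul]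
    rw [step, sum_rot]
    refine Finset.sum_congr rfl fun a _ => Finset.sum_congr rfl fun b _ => ?_
    rw [Finset.mul_sum]
    exact Finset.sum_congr rfl fun c _ => by ring
  -- flatness handles the remaining terms
  have h36 : (∑ a, ∑ b, P a * pdB (fun x => Γ x r b a) s p.1 * p.2 b)
        + (∑ c, ∑ d, (∑ a, P a * Γ p.1 r c a) * Γ p.1 s d c * p.2 d)
      = (∑ a, ∑ b, P a * pdB (fun x => Γ x s b a) r p.1 * p.2 b)
        + (∑ c, ∑ d, (∑ a, P a * Γ p.1 s c a) * Γ p.1 r d c * p.2 d) := by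
    rw [h6 s r, h6 r s, ← Finset.sum_add_distrib, ← Finset.sum_add_distrib]
    refine Finset.sum_congr rfl fun a _ => ?_
    rw [← Finset.sum_add_distrib, ← Finset.sum_add_distrib]
    refine Finset.sum_congr rfl fun b _ => ?_
    have hf := hflat p.1 s r a b
    rw [Finset.sum_sub_distrib] at hf
    linear_combination (P a * p.2 b) * hf
  linarith [hH, h5, h36]

end
end

section
/- Let ε : ℝⁿ × ℝⁿ → (Fin n → Fin n → ℝ) be smooth with vanishing nonlinear curvature (as in the nonlinear total derivative setup), and let D_r be the nonlinear total derivative on functions θ : ℝⁿ × ℝⁿ → ℝ. If f : ℝⁿ → ℝⁿ is a smooth solution of ∂fⁱ/∂xʲ = εⱼⁱ(x, f(x)), then for any smooth θ : ℝⁿ × ℝⁿ → ℝ, the restriction x ↦ θ(x, f(x)) has derivative in direction r equal to (D_r θ)(x, f(x)). In particular, D θ = 0 implies that θ is constant on the graph of every such solution f (on a connected domain). -/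
/-! Proposition 14: along a solution graph of the defining PDE, the derivative of
the restriction of θ is the total derivative; hence Dθ = 0 forces θ to be
constant on graphs of solutions. -/

noncomputable section

open scoped BigOperators

def pdy {n : ℕ} (f : (Fin n → ℝ) × (Fin n → ℝ) → ℝ) (a : Fin n)
    (p : (Fin n → ℝ) × (Fin n → ℝ)) : ℝ :=
  fderiv ℝ f p (0, Pi.single a 1)

/-- The nonlinear total derivative. -/
def ntotalD {n : ℕ} (ε : (Fin n → ℝ) × (Fin n → ℝ) → Fin n → Fin n → ℝ)
    (θ : (Fin n → ℝ) × (Fin n → ℝ) → ℝ) (r : Fin n)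
    (p : (Fin n → ℝ) × (Fin n → ℝ)) : ℝ :=
  pdx θ r p + ∑ a, pdy θ a p * ε p r a

theorem restriction_deriv_and_constancy {n : ℕ}
    (ε : (Fin n → ℝ) × (Fin n → ℝ) → Fin n → Fin n → ℝ)
    (hε : ∀ r a : Fin n, ContDiff ℝ (⊤ : ℕ∞) fun p => ε p r a)
    (hflat : ∀ (p : (Fin n → ℝ) × (Fin n → ℝ)) (a r s : Fin n),
      pdx (fun q => ε q r a) s p + ∑ b, pdy (fun q => ε q r a) b p * ε p s b
        = pdx (fun q => ε q s a) r p + ∑ b, pdy (fun q => ε q s a) b p * ε p r b)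
    (f : (Fin n → ℝ) → Fin n → ℝ) (hf : ContDiff ℝ (⊤ : ℕ∞) f)
    (hPDE : ∀ (x : Fin n → ℝ) (j i : Fin n),
      fderiv ℝ (fun x => f x i) x (Pi.single j 1) = ε (x, f x) j i)
    (θ : (Fin n → ℝ) × (Fin n → ℝ) → ℝ) (hθ : ContDiff ℝ (⊤ : ℕ∞) θ) :
    (∀ (x : Fin n → ℝ) (r : Fin n),
        fderiv ℝ (fun x => θ (x, f x)) x (Pi.single r 1) = ntotalD ε θ r (x, f x)) ∧
    ((∀ (r : Fin n) (p : (Fin n → ℝ) × (Fin n → ℝ)), ntotalD ε θ r p = 0) →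
      ∀ x y : Fin n → ℝ, θ (x, f x) = θ (y, f y)) := by
  have hfd : Differentiable ℝ f := hf.differentiable (by simp)
  have hθd : Differentiable ℝ θ := hθ.differentiable (by simp)
  have hF : ∀ x : Fin n → ℝ, HasFDerivAt (fun x => (x, f x))
      ((ContinuousLinearMap.id ℝ (Fin n → ℝ)).prod (fderiv ℝ f x)) x := fun x =>
    HasFDerivAt.prodMk (hasFDerivAt_id x) (hfd x).hasFDerivAt
  have hfi : ∀ (x : Fin n → ℝ) (v : Fin n → ℝ) (i : Fin n),
      fderiv ℝ f x v i = fderiv ℝ (fun x => f x i) x v := by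
    intro x v i
    have h : HasFDerivAt (fun x => f x i)
        ((ContinuousLinearMap.proj i).comp (fderiv ℝ f x)) x :=
      (ContinuousLinearMap.proj i : (Fin n → ℝ) →L[ℝ] ℝ).hasFDerivAt.comp x
        (hfd x).hasFDerivAt
    rw [h.fderiv]; rfl
  have key : ∀ (x : Fin n → ℝ) (r : Fin n),
      fderiv ℝ (fun x => θ (x, f x)) x (Pi.single r 1) = ntotalD ε θ r (x, f x) := by
    intro x r
    have hc : HasFDerivAt (fun x => θ (x, f x))
        ((fderiv ℝ θ (x, f x)).comp
          ((ContinuousLinearMap.id ℝ (Fin n → ℝ)).prod (fderiv ℝ f x))) x :=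
      (hθd (x, f x)).hasFDerivAt.comp x (hF x)
    rw [hc.fderiv]
    have hv : fderiv ℝ f x (Pi.single r 1) = fun a => ε (x, f x) r a := by
      funext a; rw [hfi]; exact hPDE x r a
    show fderiv ℝ θ (x, f x) (Pi.single r 1, fderiv ℝ f x (Pi.single r 1)) = _
    rw [hv]
    have hsplit : ((Pi.single r 1 : Fin n → ℝ), fun a => ε (x, f x) r a)
        = (Pi.single r 1, (0 : Fin n → ℝ))
          + ∑ a, ε (x, f x) r a • ((0 : Fin n → ℝ), (Pi.single a 1 : Fin n → ℝ)) := by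
      have : (fun a => ε (x, f x) r a) = ∑ a : Fin n, ε (x, f x) r a • (Pi.single a 1 : Fin n → ℝ) := by
        funext b
        simp [Finset.sum_apply, Pi.single_apply, Finset.sum_ite_eq']
      rw [Prod.ext_iff]
      constructor
      · simp [Prod.fst_sum]
      · simpa [Prod.snd_sum] using this
    rw [hsplit, map_add, map_sum]
    simp only [map_smul]
    rw [ntotalD, pdx]
    congr 1
    refine Finset.sum_congr rfl fun a _ => ?_
    rw [pdy, smul_eq_mul, mul_comm]
  refine ⟨key, fun hzero x y => ?_⟩
  have hg : Differentiable ℝ (fun x => θ (x, f x)) := fun x =>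
    (hθd (x, f x)).comp x ((differentiable_id.prodMk hfd) x)
  have hz : ∀ x, fderiv ℝ (fun x => θ (x, f x)) x = 0 := by
    intro x
    ext v
    have hv : v = ∑ r : Fin n, v r • (Pi.single r 1 : Fin n → ℝ) := by
      funext b
      simp [Finset.sum_apply, Pi.single_apply, Finset.sum_ite_eq']
    rw [hv, map_sum]
    simp only [map_smul, key, hzero]
    simp
  exact is_const_of_fderiv_eq_zero hg hz x y

end
end

section
/- Let ε : ℝⁿ × ℝⁿ → GL(n,ℝ) be a smooth map with ε(p,p) = I and ε(q,r)ε(p,q) = ε(p,r) for all p,q,r. A smooth vector field ξ : ℝⁿ → ℝⁿ satisfies ε(p,q)·ξ(p) = ξ(q) for all p,q (ε-invariance) if and only if it satisfies the linear PDE ∂ξⁱ/∂xʲ = Σ_a Γⱼₐⁱ(x) ξᵃ(x) where Γⱼₐⁱ(x) = [∂εₐⁱ(x,y)/∂yʲ]_{y=x}. -/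
/-! Proposition 1 of [13] / Proposition 5: a vector field is ε-invariant iff it is
∇-parallel, i.e. solves the linear PDE ∂ξⁱ/∂xʲ = Σ_a Γⱼₐⁱ ξᵃ. -/

noncomputable section

open scoped BigOperators

theorem invariant_iff_parallel {n : ℕ}
    (ε : (Fin n → ℝ) × (Fin n → ℝ) → Matrix (Fin n) (Fin n) ℝ)
    (hsmooth : ∀ i j : Fin n, ContDiff ℝ (⊤ : ℕ∞) fun p => ε p i j)
    (hid : ∀ p : Fin n → ℝ, ε (p, p) = 1)
    (hcomp : ∀ p q r : Fin n → ℝ, ε (q, r) * ε (p, q) = ε (p, r))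
    (ξ : (Fin n → ℝ) → Fin n → ℝ) (hξ : ContDiff ℝ (⊤ : ℕ∞) ξ) :
    (∀ p q : Fin n → ℝ, (ε (p, q)).mulVec (ξ p) = ξ q) ↔
    (∀ (x : Fin n → ℝ) (j i : Fin n),
      fderiv ℝ (fun x => ξ x i) x (Pi.single j 1)
        = ∑ a, pdy (fun p => ε p i a) j (x, x) * ξ x a) := by
  classical
  have hEd : ∀ i a : Fin n, Differentiable ℝ (fun p => ε p i a) :=
    fun i a => (hsmooth i a).differentiable (by simp)
  have hξd : ∀ i : Fin n, Differentiable ℝ (fun x => ξ x i) :=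
    fun i => (contDiff_pi.mp hξ i).differentiable (by simp)
  have hfst : ∀ (i a : Fin n) (x p : Fin n → ℝ),
      HasFDerivAt (fun y => ε (y, p) i a)
        ((fderiv ℝ (fun q => ε q i a) (x, p)).comp
          (ContinuousLinearMap.inl ℝ (Fin n → ℝ) (Fin n → ℝ))) x :=
    fun i a x p => by
      have := ((hEd i a (x, p)).hasFDerivAt).comp x (hasFDerivAt_prodMk_left (𝕜 := ℝ) x p)
      exact this
  have hsnd : ∀ (i a : Fin n) (x p : Fin n → ℝ),
      HasFDerivAt (fun q => ε (x, q) i a)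
        ((fderiv ℝ (fun q => ε q i a) (x, p)).comp
          (ContinuousLinearMap.inr ℝ (Fin n → ℝ) (Fin n → ℝ))) p :=
    fun i a x p => ((hEd i a (x, p)).hasFDerivAt).comp p (hasFDerivAt_prodMk_right x p)
  constructor
  · -- invariance → PDE
    intro h x j i
    have heq : (fun q => ∑ a, ε (x, q) i a * ξ x a) = fun q => ξ q i := by
      funext q
      have := congrFun (h x q) i
      simpa [Matrix.mulVec, dotProduct] using this
    have hL : HasFDerivAt (fun q => ∑ a, ε (x, q) i a * ξ x a)
        (∑ a, ξ x a • ((fderiv ℝ (fun p => ε p i a) (x, x)).comp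
          (ContinuousLinearMap.inr ℝ (Fin n → ℝ) (Fin n → ℝ)))) x :=
      HasFDerivAt.fun_sum fun a _ => (hsnd i a x x).mul_const (ξ x a)
    have hR : HasFDerivAt (fun q => ξ q i)
        (∑ a, ξ x a • ((fderiv ℝ (fun p => ε p i a) (x, x)).comp
          (ContinuousLinearMap.inr ℝ (Fin n → ℝ) (Fin n → ℝ)))) x := heq ▸ hL
    rw [hR.fderiv]
    simp [pdy, ContinuousLinearMap.sum_apply, mul_comm]
  · -- PDE → invariance
    intro h p q
    have claim : ∀ (c : Fin n → ℝ) (i : Fin n) (y : Fin n → ℝ),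
        ∑ a, ε (y, c) i a * ξ y a = ξ c i := by
      intro c i
      have hGdiff : Differentiable ℝ (fun y => ∑ a, ε (y, c) i a * ξ y a) := by
        intro y
        exact DifferentiableAt.fun_sum fun a _ =>
          ((hfst i a y c).differentiableAt).mul (hξd a y)
      have hG0 : ∀ x, fderiv ℝ (fun y => ∑ a, ε (y, c) i a * ξ y a) x = 0 := by
        intro x
        have hG : HasFDerivAt (fun y => ∑ a, ε (y, c) i a * ξ y a)
            (∑ a, (ε (x, c) i a • fderiv ℝ (fun y => ξ y a) x
              + ξ x a • ((fderiv ℝ (fun p => ε p i a) (x, c)).comp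
                (ContinuousLinearMap.inl ℝ (Fin n → ℝ) (Fin n → ℝ))))) x :=
          HasFDerivAt.fun_sum fun a _ => (hfst i a x c).mul ((hξd a x).hasFDerivAt)
        rw [hG.fderiv]
        -- key: derivative of the cocycle identity
        have hkey : ∀ (a j : Fin n),
            (fderiv ℝ (fun p => ε p i a) (x, c)) (Pi.single j 1, (0 : Fin n → ℝ))
              = -∑ b, ε (x, c) i b * pdy (fun p => ε p b a) j (x, x) := by
          intro a j
          have hC : HasFDerivAt (fun y => ∑ b, ε (y, c) i b * ε (x, y) b a)
              (∑ b, (ε (x, c) i b • ((fderiv ℝ (fun p => ε p b a) (x, x)).comp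
                  (ContinuousLinearMap.inr ℝ (Fin n → ℝ) (Fin n → ℝ)))
                + ε (x, x) b a • ((fderiv ℝ (fun p => ε p i b) (x, c)).comp
                  (ContinuousLinearMap.inl ℝ (Fin n → ℝ) (Fin n → ℝ))))) x :=
            HasFDerivAt.fun_sum fun b _ => (hfst i b x c).mul (hsnd b a x x)
          have hconst : (fun y => ∑ b, ε (y, c) i b * ε (x, y) b a)
              = fun _ => ε (x, c) i a := by
            funext y
            have := congrFun (congrFun (hcomp x y c) i) a
            simpa [Matrix.mul_apply] using this
          have hC0 : HasFDerivAt (fun y => ∑ b, ε (y, c) i b * ε (x, y) b a)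
              (0 : (Fin n → ℝ) →L[ℝ] ℝ) x := by
            rw [hconst]; exact hasFDerivAt_const _ _
          have hz := hC.unique hC0
          have hz' := congrFun (congrArg (fun L => (L : (Fin n → ℝ) →L[ℝ] ℝ) ∘ id)
            hz) (Pi.single j 1)
          have hz2 : (∑ b, (ε (x, c) i b • ((fderiv ℝ (fun p => ε p b a) (x, x)).comp
                  (ContinuousLinearMap.inr ℝ (Fin n → ℝ) (Fin n → ℝ)))
                + ε (x, x) b a • ((fderiv ℝ (fun p => ε p i b) (x, c)).comp
                  (ContinuousLinearMap.inl ℝ (Fin n → ℝ) (Fin n → ℝ)))))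
                (Pi.single j 1) = 0 := by rw [hz]; rfl
          rw [hid x] at hz2
          simp only [ContinuousLinearMap.sum_apply, ContinuousLinearMap.add_apply,
            ContinuousLinearMap.smul_apply, ContinuousLinearMap.comp_apply,
            ContinuousLinearMap.inl_apply, ContinuousLinearMap.inr_apply,
            smul_eq_mul, Matrix.one_apply] at hz2
          rw [Finset.sum_add_distrib] at hz2
          have hdelta : ∑ b, (if b = a then (1 : ℝ) else 0) *
              (fderiv ℝ (fun p => ε p i b) (x, c)) (Pi.single j 1, (0 : Fin n → ℝ))
              = (fderiv ℝ (fun p => ε p i a) (x, c)) (Pi.single j 1, (0 : Fin n → ℝ)) := by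
            rw [Finset.sum_eq_single a] <;> simp +contextual
          rw [hdelta] at hz2
          simp only [pdy]
          linarith [hz2]
        ext v
        have hv : v = ∑ j, v j • (Pi.single j 1 : Fin n → ℝ) := by
          funext k
          simp [Finset.sum_apply, Pi.single_apply]
        rw [ContinuousLinearMap.zero_apply, hv, map_sum]
        refine Finset.sum_eq_zero fun j _ => ?_
        rw [map_smul]
        have hbasis : (∑ a, (ε (x, c) i a • fderiv ℝ (fun y => ξ y a) x
              + ξ x a • ((fderiv ℝ (fun p => ε p i a) (x, c)).comp
                (ContinuousLinearMap.inl ℝ (Fin n → ℝ) (Fin n → ℝ)))))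
            (Pi.single j 1) = 0 := by
          simp only [ContinuousLinearMap.sum_apply, ContinuousLinearMap.add_apply,
            ContinuousLinearMap.smul_apply, ContinuousLinearMap.comp_apply,
            ContinuousLinearMap.inl_apply, smul_eq_mul]
          have step : ∀ a : Fin n,
              ε (x, c) i a * (fderiv ℝ (fun y => ξ y a) x) (Pi.single j 1)
                + ξ x a * (fderiv ℝ (fun p => ε p i a) (x, c))
                  (Pi.single j 1, (0 : Fin n → ℝ))
              = (∑ b, ε (x, c) i a * (pdy (fun p => ε p a b) j (x, x) * ξ x b))
                - ∑ b, ξ x a * (ε (x, c) i b * pdy (fun p => ε p b a) j (x, x)) := by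
            intro a
            rw [h x j a, hkey a j, Finset.mul_sum, mul_neg, Finset.mul_sum,
              sub_eq_add_neg]
          rw [Finset.sum_congr rfl fun a _ => step a, Finset.sum_sub_distrib]
          have hswap : ∑ a, ∑ b, ξ x a * (ε (x, c) i b * pdy (fun p => ε p b a) j (x, x))
              = ∑ a, ∑ b, ε (x, c) i a * (pdy (fun p => ε p a b) j (x, x) * ξ x b) := by
            rw [Finset.sum_comm]
            exact Finset.sum_congr rfl fun a _ => Finset.sum_congr rfl fun b _ => by ring
          rw [hswap, sub_self]
        rw [hbasis, smul_zero]
      intro y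
      have := is_const_of_fderiv_eq_zero (𝕜 := ℝ) hGdiff hG0 y c
      simpa [hid c, Matrix.one_apply] using this
    funext i
    have := claim q i p
    simpa [Matrix.mulVec, dotProduct] using this

end
end

section
/- Let Γ : ℝⁿ → (Fin n → Fin n → Fin n → ℝ) be smooth and define (D_r Ω)(x,ξ) = ∂Ω/∂xʳ + Σ_{a,b}(∂Ω/∂ξᵃ)Γᵣᵇᵃ(x)ξᵇ on smooth Ω : ℝⁿ × ℝⁿ → ℝ. Suppose Φ : ℝⁿ → GL(n,ℝ) is smooth and solves ∂Φᵃ_c/∂xʳ = Σ_b Γᵣᵇᵃ(x) Φᵇ_c, and fix p ∈ ℝⁿ with Φ(p) = I. If Ω satisfies Ω(x, Φ(x)·ξ₀) = Ω(p, ξ₀) for all x ∈ ℝⁿ and ξ₀ ∈ ℝⁿ, then D_r Ω = 0 everywhere for all r. Conversely, if D_r Ω = 0 for all r, then Ω(x, Φ(x)·ξ₀) is independent of x, so Ω(x, Φ(x)·ξ₀) = Ω(p, ξ₀) for all x, ξ₀ ∈ ℝⁿ. -/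
noncomputable section

open scoped BigOperators

namespace Prop5Aux

variable {n : ℕ}

lemma g_eq (Φ : (Fin n → ℝ) → Matrix (Fin n) (Fin n) ℝ) (ξ₀ : Fin n → ℝ) :
    (fun x => (Φ x).mulVec ξ₀) = fun x a => ∑ c, Φ x a c * ξ₀ c := by
  funext x a; simp [Matrix.mulVec, dotProduct]

lemma g_contDiff (Φ : (Fin n → ℝ) → Matrix (Fin n) (Fin n) ℝ)
    (hΦ : ∀ a c : Fin n, ContDiff ℝ (⊤ : ℕ∞) fun x => Φ x a c) (ξ₀ : Fin n → ℝ) :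
    ContDiff ℝ (⊤ : ℕ∞) (fun x => (Φ x).mulVec ξ₀) := by
  rw [g_eq]
  exact contDiff_pi.mpr fun a => ContDiff.sum fun c _ => (hΦ a c).mul contDiff_const

lemma vec_eq_sum (w : Fin n → ℝ) : w = ∑ r, w r • (Pi.single r 1 : Fin n → ℝ) := by
  funext j
  simp [Pi.single_apply]

lemma gderiv (Γ : (Fin n → ℝ) → Fin n → Fin n → Fin n → ℝ)
    (Φ : (Fin n → ℝ) → Matrix (Fin n) (Fin n) ℝ)
    (hΦ : ∀ a c : Fin n, ContDiff ℝ (⊤ : ℕ∞) fun x => Φ x a c)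
    (hΦode : ∀ (x : Fin n → ℝ) (r a c : Fin n),
      fderiv ℝ (fun x => Φ x a c) x (Pi.single r 1) = ∑ b, Γ x r b a * Φ x b c)
    (ξ₀ x : Fin n → ℝ) (r : Fin n) :
    fderiv ℝ (fun x => (Φ x).mulVec ξ₀) x (Pi.single r 1)
      = fun a => ∑ b, Γ x r b a * ((Φ x).mulVec ξ₀) b := by
  have hdiff : ∀ a c : Fin n, DifferentiableAt ℝ (fun x => Φ x a c) x :=
    fun a c => ((hΦ a c).differentiable (by simp)) x
  rw [g_eq]
  rw [fderiv_pi (fun a => DifferentiableAt.fun_sum fun c _ => (hdiff a c).mul_const (ξ₀ c))]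
  funext a
  rw [ContinuousLinearMap.pi_apply]
  rw [fderiv_fun_sum (fun c _ => (hdiff a c).mul_const (ξ₀ c))]
  rw [ContinuousLinearMap.sum_apply]
  have h1 : ∀ c : Fin n,
      (fderiv ℝ (fun x => Φ x a c * ξ₀ c) x) (Pi.single r 1)
        = ξ₀ c * ∑ b, Γ x r b a * Φ x b c := by
    intro c
    rw [fderiv_mul_const (hdiff a c), ContinuousLinearMap.smul_apply, hΦode x r a c,
      smul_eq_mul]
  rw [Finset.sum_congr rfl fun c _ => h1 c]
  simp only [Matrix.mulVec, dotProduct, Finset.mul_sum]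
  rw [Finset.sum_comm]
  exact Finset.sum_congr rfl fun b _ => Finset.sum_congr rfl fun c _ => by ring

lemma key (Γ : (Fin n → ℝ) → Fin n → Fin n → Fin n → ℝ)
    (Φ : (Fin n → ℝ) → Matrix (Fin n) (Fin n) ℝ)
    (hΦ : ∀ a c : Fin n, ContDiff ℝ (⊤ : ℕ∞) fun x => Φ x a c)
    (hΦode : ∀ (x : Fin n → ℝ) (r a c : Fin n),
      fderiv ℝ (fun x => Φ x a c) x (Pi.single r 1) = ∑ b, Γ x r b a * Φ x b c)
    (Ω : (Fin n → ℝ) × (Fin n → ℝ) → ℝ) (hΩ : ContDiff ℝ (⊤ : ℕ∞) Ω)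
    (ξ₀ x : Fin n → ℝ) (r : Fin n) :
    fderiv ℝ (fun x => Ω (x, (Φ x).mulVec ξ₀)) x (Pi.single r 1)
      = totalD Γ Ω r (x, (Φ x).mulVec ξ₀) := by
  set g : (Fin n → ℝ) → (Fin n → ℝ) := fun x => (Φ x).mulVec ξ₀ with hg
  have hgd : Differentiable ℝ g := (g_contDiff Φ hΦ ξ₀).differentiable (by simp)
  have hFd : DifferentiableAt ℝ (fun x => (x, g x)) x :=
    (differentiableAt_id.prodMk (hgd x))
  have hΩd : DifferentiableAt ℝ Ω (x, g x) := (hΩ.differentiable (by simp)) _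
  have hcomp : fderiv ℝ (fun x => Ω (x, g x)) x
      = (fderiv ℝ Ω (x, g x)).comp (fderiv ℝ (fun x => (x, g x)) x) := by
    exact fderiv_comp x hΩd hFd
  have hF : fderiv ℝ (fun x => (x, g x)) x
      = (ContinuousLinearMap.id ℝ (Fin n → ℝ)).prod (fderiv ℝ g x) := by
    exact ((hasFDerivAt_id x).prodMk (hgd x).hasFDerivAt).fderiv
  rw [hcomp, hF]
  set D := fderiv ℝ Ω (x, g x) with hD
  set v : Fin n → ℝ := fderiv ℝ g x (Pi.single r 1) with hv
  have happ : (D.comp ((ContinuousLinearMap.id ℝ (Fin n → ℝ)).prod (fderiv ℝ g x)))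
      (Pi.single r 1) = D (Pi.single r 1, v) := rfl
  rw [happ]
  have hsplit : (Pi.single r 1, v) = ((Pi.single r (1:ℝ), (0 : Fin n → ℝ)) :
      (Fin n → ℝ) × (Fin n → ℝ)) + ((0 : Fin n → ℝ), v) := by
    simp
  rw [hsplit, map_add]
  have hvsum : ((0 : Fin n → ℝ), v) = ∑ a, v a • (((0 : Fin n → ℝ), Pi.single a 1) : (Fin n → ℝ) × (Fin n → ℝ)) := by
    refine Prod.ext ?_ ?_
    · rw [Prod.fst_sum]; simp
    · rw [Prod.snd_sum]
      simpa using vec_eq_sum v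
  rw [hvsum, map_sum]
  have hterm : ∀ a : Fin n, D (v a • (((0 : Fin n → ℝ), Pi.single a 1) : (Fin n → ℝ) × (Fin n → ℝ)))
      = v a * pdxi Ω a (x, g x) := by
    intro a
    rw [map_smul, smul_eq_mul, pdxi]
  rw [Finset.sum_congr rfl fun a _ => hterm a]
  have hva : ∀ a : Fin n, v a = ∑ b, Γ x r b a * g x b := by
    intro a
    rw [hv, gderiv Γ Φ hΦ hΦode ξ₀ x r]
  rw [totalD, pdx]
  congr 1
  refine Finset.sum_congr rfl fun a _ => ?_
  rw [hva a, Finset.sum_mul]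
  refine Finset.sum_congr rfl fun b _ => ?_
  ring

end Prop5Aux

theorem kernel_eq_invariants {n : ℕ}
    (Γ : (Fin n → ℝ) → Fin n → Fin n → Fin n → ℝ)
    (hΓ : ∀ r b a : Fin n, ContDiff ℝ (⊤ : ℕ∞) fun x => Γ x r b a)
    (Φ : (Fin n → ℝ) → Matrix (Fin n) (Fin n) ℝ)
    (hΦsmooth : ∀ a c : Fin n, ContDiff ℝ (⊤ : ℕ∞) fun x => Φ x a c)
    (hΦunit : ∀ x : Fin n → ℝ, IsUnit (Φ x))
    (hΦode : ∀ (x : Fin n → ℝ) (r a c : Fin n),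
      fderiv ℝ (fun x => Φ x a c) x (Pi.single r 1) = ∑ b, Γ x r b a * Φ x b c)
    (p : Fin n → ℝ) (hΦp : Φ p = 1)
    (Ω : (Fin n → ℝ) × (Fin n → ℝ) → ℝ) (hΩ : ContDiff ℝ (⊤ : ℕ∞) Ω) :
    ((∀ (x ξ₀ : Fin n → ℝ), Ω (x, (Φ x).mulVec ξ₀) = Ω (p, ξ₀)) →
      ∀ (r : Fin n) (q : (Fin n → ℝ) × (Fin n → ℝ)), totalD Γ Ω r q = 0) ∧
    ((∀ (r : Fin n) (q : (Fin n → ℝ) × (Fin n → ℝ)), totalD Γ Ω r q = 0) →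
      ∀ (x ξ₀ : Fin n → ℝ), Ω (x, (Φ x).mulVec ξ₀) = Ω (p, ξ₀)) := by
  constructor
  · -- invariance ⇒ D = 0
    intro hinv r q
    obtain ⟨x, ξ⟩ := q
    set ξ₀ : Fin n → ℝ := (Φ x)⁻¹.mulVec ξ with hξ₀
    have hξ : (Φ x).mulVec ξ₀ = ξ := by
      rw [hξ₀, Matrix.mulVec_mulVec,
        Matrix.mul_nonsing_inv _ ((Matrix.isUnit_iff_isUnit_det _).mp (hΦunit x)),
        Matrix.one_mulVec]
    have hkey := Prop5Aux.key Γ Φ hΦsmooth hΦode Ω hΩ ξ₀ x r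
    have hconst : (fun x => Ω (x, (Φ x).mulVec ξ₀)) = fun _ => Ω (p, ξ₀) :=
      funext fun y => hinv y ξ₀
    rw [hconst, fderiv_fun_const] at hkey
    simp only [Pi.zero_apply, ContinuousLinearMap.zero_apply] at hkey
    rw [hξ] at hkey
    exact hkey.symm
  · -- D = 0 ⇒ invariance
    intro hD x ξ₀
    set h : (Fin n → ℝ) → ℝ := fun x => Ω (x, (Φ x).mulVec ξ₀) with hh
    have hhd : Differentiable ℝ h :=
      (hΩ.comp (contDiff_id.prodMk (Prop5Aux.g_contDiff Φ hΦsmooth ξ₀))).differentiable (by simp)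
    have hzero : ∀ y, fderiv ℝ h y = 0 := by
      intro y
      ext w
      have hw : w = ∑ r, w r • (Pi.single r 1 : Fin n → ℝ) := Prop5Aux.vec_eq_sum w
      rw [hw, map_sum]
      have : ∀ r : Fin n, fderiv ℝ h y (w r • (Pi.single r 1 : Fin n → ℝ)) = 0 := by
        intro r
        rw [map_smul]
        have := Prop5Aux.key Γ Φ hΦsmooth hΦode Ω hΩ ξ₀ y r
        rw [hh, this, hD r]
        simp
      simp [this]
    have hxp := is_const_of_fderiv_eq_zero hhd hzero x p
    rw [hh] at hxp
    simpa [hΦp, Matrix.one_mulVec] using hxp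

end
end

section
/- Let Γ̃ : ℝⁿ → (Fin n → Fin n → Fin n → ℝ) be smooth with vanishing curvature, Γ̂ⱼₖⁱ = Γ̃ₖⱼⁱ, also with vanishing curvature, and T̃ⁱⱼₖ = Γ̃ⱼₖⁱ − Γ̃ₖⱼⁱ. For smooth ω : ℝⁿ → (Fin n → ℝ) (a 1-form, i.e., a linear horizontal 0-form), if ∇̃ω = 0 (i.e., ∂ᵣω_a + Σ_b ω_b Γ̃ᵣₐᵇ = 0 with the paper's convention from (16)), then the 2-index object (d̂ω)_{ra} := ∇̂_r ω_a − ∇̂_a ω_r satisfies ∇̃(d̂ω) = 0, where ∇̂_r ω_a = ∂ᵣω_a + Σ_b ω_b Γ̂ᵣₐᵇ and ∇̃ acts on the (0,2)-tensor d̂ω via Γ̃ on both lower indices (with the same sign convention). -/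
/-! Proposition 8, case k = 0: the linear horizontal differential d̂ maps
ε̃-invariant 1-forms to ε̃-invariant (0,2)-tensors. -/

noncomputable section

open scoped BigOperators

/-- Curvature `Rʲₖₗ,ᵢ = ∂ᵢΓₖₗʲ − ∂ₖΓᵢₗʲ + Σ_a (ΓᵢₗᵃΓₖₐʲ − ΓₖₗᵃΓᵢₐʲ)`. -/
def curv {n : ℕ} (Γ : (Fin n → ℝ) → Fin n → Fin n → Fin n → ℝ)
    (x : Fin n → ℝ) (j k l i : Fin n) : ℝ :=
  pdB (fun x => Γ x k l j) i x - pdB (fun x => Γ x i l j) k x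
    + ∑ a, (Γ x i l a * Γ x k a j - Γ x k l a * Γ x i a j)

/-- `(d̂ω)_{ra} = ∇̂_r ω_a − ∇̂_a ω_r` where `∇̂_r ω_a = ∂_r ω_a + Σ_b ω_b Γ̂ᵣₐᵇ`
and `Γ̂ᵣₐᵇ = Γ̃ₐᵣᵇ`. -/
def dhat {n : ℕ} (Γt : (Fin n → ℝ) → Fin n → Fin n → Fin n → ℝ)
    (ω : (Fin n → ℝ) → Fin n → ℝ) (x : Fin n → ℝ) (r a : Fin n) : ℝ :=
  (pdB (fun x => ω x a) r x + ∑ b, ω x b * Γt x a r b)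
    - (pdB (fun x => ω x r) a x + ∑ b, ω x b * Γt x r a b)

/-! ### Auxiliary lemmas -/

lemma pdB_sum {n : ℕ} {f : Fin n → (Fin n → ℝ) → ℝ} {x : Fin n → ℝ} (r : Fin n)
    (hf : ∀ b, DifferentiableAt ℝ (f b) x) :
    pdB (fun y => ∑ b, f b y) r x = ∑ b, pdB (f b) r x := by
  unfold pdB
  rw [fderiv_fun_sum (fun b _ => hf b)]
  simp

lemma pdB_mul {n : ℕ} {f g : (Fin n → ℝ) → ℝ} {x : Fin n → ℝ} (r : Fin n)
    (hf : DifferentiableAt ℝ f x) (hg : DifferentiableAt ℝ g x) :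
    pdB (fun y => f y * g y) r x = pdB f r x * g x + f x * pdB g r x := by
  unfold pdB
  rw [fderiv_fun_mul hf hg]
  simp
  ring

lemma pdB_sub {n : ℕ} {f g : (Fin n → ℝ) → ℝ} {x : Fin n → ℝ} (r : Fin n)
    (hf : DifferentiableAt ℝ f x) (hg : DifferentiableAt ℝ g x) :
    pdB (fun y => f y - g y) r x = pdB f r x - pdB g r x := by
  unfold pdB
  rw [fderiv_fun_sub hf hg]
  simp

lemma pdB_const_mul {n : ℕ} {f : (Fin n → ℝ) → ℝ} {x : Fin n → ℝ} (r : Fin n)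
    (c : ℝ) (hf : DifferentiableAt ℝ f x) :
    pdB (fun y => c * f y) r x = c * pdB f r x := by
  unfold pdB
  rw [fderiv_const_mul hf]
  simp

/-- The key pointwise algebraic identity: `∇̃(d̂ω) = ω ⌟ (−R̃ + R̃' + R̂)`. -/
lemma key_algebra {n : ℕ} (g : Fin n → Fin n → Fin n → ℝ)
    (dg : Fin n → Fin n → Fin n → Fin n → ℝ) (w : Fin n → ℝ) (i r a : Fin n)
    (hRt : ∀ j k l i', dg i' k l j - dg k i' l j
        + ∑ b, (g i' l b * g k b j - g k l b * g i' b j) = 0)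
    (hRh : ∀ j k l i', dg i' l k j - dg k l i' j
        + ∑ b, (g l i' b * g b k j - g l k b * g b i' j) = 0) :
    ∑ b, ((-∑ c, w c * g i b c) * (2 * (g a r b - g r a b))
          + w b * (2 * (dg i a r b - dg i r a b)))
      + ∑ b, ((∑ c, w c * (2 * (g a b c - g b a c))) * g i r b
          + (∑ c, w c * (2 * (g b r c - g r b c))) * g i a b) = 0 := by
  set P : Fin n → Fin n → ℝ := fun b c =>
    w c * (2 * (-(g i b c) * (g a r b - g r a b)
      + (g a b c - g b a c) * g i r b + (g b r c - g r b c) * g i a b)) with hP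
  have step1 : ∑ b, ((-∑ c, w c * g i b c) * (2 * (g a r b - g r a b))
          + w b * (2 * (dg i a r b - dg i r a b)))
      + ∑ b, ((∑ c, w c * (2 * (g a b c - g b a c))) * g i r b
          + (∑ c, w c * (2 * (g b r c - g r b c))) * g i a b)
      = ∑ b, (w b * (2 * (dg i a r b - dg i r a b)) + ∑ c, P b c) := by
    rw [← Finset.sum_add_distrib]
    refine Finset.sum_congr rfl fun b _ => ?_
    have e1 : (-∑ c, w c * g i b c) * (2 * (g a r b - g r a b))
        = ∑ c, w c * (2 * (-(g i b c) * (g a r b - g r a b))) := by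
      rw [neg_mul, Finset.sum_mul, ← Finset.sum_neg_distrib]
      exact Finset.sum_congr rfl fun c _ => by ring
    have e2 : (∑ c, w c * (2 * (g a b c - g b a c))) * g i r b
        = ∑ c, w c * (2 * ((g a b c - g b a c) * g i r b)) := by
      rw [Finset.sum_mul]
      exact Finset.sum_congr rfl fun c _ => by ring
    have e3 : (∑ c, w c * (2 * (g b r c - g r b c))) * g i a b
        = ∑ c, w c * (2 * ((g b r c - g r b c) * g i a b)) := by
      rw [Finset.sum_mul]
      exact Finset.sum_congr rfl fun c _ => by ring
    have e4 : ∑ c, P b c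
        = (∑ c, w c * (2 * (-(g i b c) * (g a r b - g r a b))))
          + ((∑ c, w c * (2 * ((g a b c - g b a c) * g i r b)))
            + ∑ c, w c * (2 * ((g b r c - g r b c) * g i a b))) := by
      rw [← Finset.sum_add_distrib, ← Finset.sum_add_distrib]
      exact Finset.sum_congr rfl fun c _ => by rw [hP]; ring
    rw [e1, e2, e3, e4]; ring
  rw [step1, Finset.sum_add_distrib, Finset.sum_comm, ← Finset.sum_add_distrib]
  apply Finset.sum_eq_zero
  intro c _
  have h1 := hRt c i r a
  have h2 := hRt c i a r
  have h3 := hRh c r i a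
  have hsum : ∑ b, P b c
      = w c * 2 * (-(∑ b, (g a r b * g i b c - g i r b * g a b c))
          + (∑ b, (g r a b * g i b c - g i a b * g r b c))
          + ∑ b, (g i a b * g b r c - g i r b * g b a c)) := by
    have e : ∑ b, P b c = ∑ b, (w c * 2 * (-(g a r b * g i b c - g i r b * g a b c)
          + (g r a b * g i b c - g i a b * g r b c)
          + (g i a b * g b r c - g i r b * g b a c))) :=
      Finset.sum_congr rfl fun b _ => by rw [hP]; ring
    rw [e, ← Finset.mul_sum]
    congr 1
    rw [← Finset.sum_neg_distrib, ← Finset.sum_add_distrib, ← Finset.sum_add_distrib]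
  rw [hsum]
  linear_combination (w c * 2) * h2 + (w c * 2) * h3 - (w c * 2) * h1

theorem dhat_preserves_invariance {n : ℕ}
    (Γt : (Fin n → ℝ) → Fin n → Fin n → Fin n → ℝ)
    (hsmooth : ∀ k j i : Fin n, ContDiff ℝ (⊤ : ℕ∞) fun x => Γt x k j i)
    (hflatT : ∀ (x : Fin n → ℝ) (j k l i : Fin n), curv Γt x j k l i = 0)
    (hflatH : ∀ (x : Fin n → ℝ) (j k l i : Fin n),
      curv (fun x k l j => Γt x l k j) x j k l i = 0)
    (ω : (Fin n → ℝ) → Fin n → ℝ) (hω : ∀ a, ContDiff ℝ (⊤ : ℕ∞) fun x => ω x a)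
    (hpar : ∀ (x : Fin n → ℝ) (r a : Fin n),
      pdB (fun x => ω x a) r x + ∑ b, ω x b * Γt x r a b = 0) :
    ∀ (x : Fin n → ℝ) (i r a : Fin n),
      pdB (fun x => dhat Γt ω x r a) i x
        + ∑ b, (dhat Γt ω x b a * Γt x i r b + dhat Γt ω x r b * Γt x i a b)
        = 0 := by
  intro x i r a
  have hΓd : ∀ (k l j : Fin n) (y : Fin n → ℝ),
      DifferentiableAt ℝ (fun x => Γt x k l j) y := fun k l j y =>
    ((hsmooth k l j).differentiable (by simp)).differentiableAt
  have hωd : ∀ (b : Fin n) (y : Fin n → ℝ),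
      DifferentiableAt ℝ (fun x => ω x b) y := fun b y =>
    ((hω b).differentiable (by simp)).differentiableAt
  have hdhat : ∀ (y : Fin n → ℝ) (r a : Fin n),
      dhat Γt ω y r a = ∑ b, ω y b * (2 * (Γt y a r b - Γt y r a b)) := by
    intro y r a
    have h1 := hpar y r a
    have h2 := hpar y a r
    have e : ∑ b, ω y b * (2 * (Γt y a r b - Γt y r a b))
        = 2 * ((∑ b, ω y b * Γt y a r b) - ∑ b, ω y b * Γt y r a b) := by
      rw [← Finset.sum_sub_distrib, Finset.mul_sum]
      exact Finset.sum_congr rfl fun b _ => by ring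
    unfold dhat
    rw [e]
    linarith
  have hfun : (fun y => dhat Γt ω y r a)
      = fun y => ∑ b, ω y b * (2 * (Γt y a r b - Γt y r a b)) :=
    funext fun y => hdhat y r a
  have hpd : pdB (fun y => ∑ b, ω y b * (2 * (Γt y a r b - Γt y r a b))) i x
      = ∑ b, (pdB (fun y => ω y b) i x * (2 * (Γt x a r b - Γt x r a b))
          + ω x b * (2 * (pdB (fun y => Γt y a r b) i x
              - pdB (fun y => Γt y r a b) i x))) := by
    rw [pdB_sum (f := fun b y => ω y b * (2 * (Γt y a r b - Γt y r a b))) i (fun b => (hωd b x).mul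
      (((hΓd a r b x).sub (hΓd r a b x)).const_mul 2))]
    refine Finset.sum_congr rfl fun b _ => ?_
    rw [pdB_mul (g := fun y => 2 * (Γt y a r b - Γt y r a b)) i (hωd b x) (((hΓd a r b x).sub (hΓd r a b x)).const_mul 2)]
    congr 1
    rw [pdB_const_mul (f := fun y => Γt y a r b - Γt y r a b) i 2 ((hΓd a r b x).sub (hΓd r a b x)),
      pdB_sub i (hΓd a r b x) (hΓd r a b x)]
  have hpω : ∀ b, pdB (fun y => ω y b) i x = -∑ c, ω x c * Γt x i b c := by
    intro b
    have := hpar x i b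
    linarith
  rw [show (fun x => dhat Γt ω x r a) = fun y => ∑ b, ω y b
      * (2 * (Γt y a r b - Γt y r a b)) from hfun, hpd]
  simp only [hpω, hdhat]
  exact key_algebra (fun k l j => Γt x k l j)
    (fun i' k l j => pdB (fun y => Γt y k l j) i' x) (ω x) i r a
    (fun j k l i' => hflatT x j k l i')
    (fun j k l i' => hflatH x j k l i')

end
end
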